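/- arXiv:1608.02037 — 4 statements merged into one kernel-verified Lean document; each statement's English description precedes it below -/
import Mathlib

section
/- If z ∈ ℂ is a primitive n-th root of unity where n = p^k is a prime power (k ≥ 1), then z is not a root of any polynomial q ∈ ℤ[t] with q(1) = ±1. -/
/-- If `z` is a primitive `p^k`-th root of unity (`p` prime, `k ≥ 1`), then `z` is not a root of
any integer polynomial `q` with `q(1) = ±1`. -/
theorem stmt1 (p k : ℕ) (hp : p.Prime) (hk : 1 ≤ k) (z : ℂ)
    (hz : IsPrimitiveRoot z (p ^ k)) :
    ¬ ∃ q : Polynomial ℤ,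
        (q.eval 1 = 1 ∨ q.eval 1 = -1) ∧ Polynomial.eval₂ (Int.castRingHom ℂ) z q = 0 := by
  rintro ⟨q, h1, h0⟩
  haveI := Fact.mk hp
  obtain ⟨m, rfl⟩ := Nat.exists_eq_succ_of_ne_zero (by omega : k ≠ 0)
  have hpos : 0 < p ^ (m + 1) := pow_pos hp.pos _
  have hint : IsIntegral ℤ z := hz.isIntegral hpos
  have hmin := Polynomial.cyclotomic_eq_minpoly hz hpos
  have hdvd : minpoly ℤ z ∣ q := minpoly.isIntegrallyClosed_dvd hint (by
    rwa [Polynomial.aeval_def])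
  rw [← hmin] at hdvd
  have hpdvd : (p : ℤ) ∣ q.eval 1 := by
    obtain ⟨r, hr⟩ := hdvd
    rw [hr, Polynomial.eval_mul, Polynomial.eval_one_cyclotomic_prime_pow]
    exact Dvd.intro _ rfl
  have : (p : ℤ) ∣ 1 := by
    rcases h1 with h | h <;> rw [h] at hpdvd
    · exact hpdvd
    · exact (dvd_neg).mp hpdvd
  exact hp.one_lt.ne' (by exact_mod_cast Int.eq_one_of_dvd_one (by positivity) this)
end

section
/- The complex number z₀ = (3 + 4i)/5 is not a root of any polynomial q ∈ ℤ[t] with q(1) = ±1. -/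
/-!
Clearing denominators, `3 + 4i` is a root of the integer polynomial `Q = q.scaleRoots 5`, whose
value at `5` is `5 ^ deg q * q(1)`. Modulo the prime `1 + i` of `ℤ[i]` both `3 + 4i` and `5`
reduce to `1`, so `Q(5) ≡ Q(3 + 4i) = 0`, and hence `q(1)` is even.
-/

open Polynomial

theorem Polynomial.aeval_one_scaleRoots_of_intCast_eq_one {R : Type*} [CommRing R] (p : ℤ[X])
    {s : ℤ} (hs : (s : R) = 1) : aeval (1 : R) (p.scaleRoots s) = p.eval 1 := by
  have := scaleRoots_eval₂_mul (Int.castRingHom R) 1 s (p := p)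
  simp only [eq_intCast, hs, one_mul, one_pow, eval₂_at_one] at this
  simpa [aeval_def] using this

namespace GaussianInt

/-- Reduction modulo the prime `1 + i`; it sends `i` to `1`. -/
def toZModTwo : GaussianInt →+* ZMod 2 :=
  Zsqrtd.lift ⟨1, by decide⟩

theorem toZModTwo_apply (z : GaussianInt) : toZModTwo z = ((z.re + z.im : ℤ) : ZMod 2) := by
  simp [toZModTwo]

theorem aeval_scaleRoots_eq_zero_of_aeval_div {q : ℤ[X]} {z : GaussianInt} {s : ℤ} (hs : s ≠ 0)
    (h : aeval ((z : ℂ) / s) q = 0) : aeval z (q.scaleRoots s) = 0 := by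
  apply toComplex_injective
  have := scaleRoots_aeval_eq_zero (r := s) h
  rw [algebraMap_int_eq, eq_intCast, mul_div_cancel₀ _ (by exact_mod_cast hs)] at this
  rw [map_zero, ← this]
  exact (aeval_algHom_apply toComplex.toIntAlgHom z _).symm

theorem even_eval_one_of_aeval_div_eq_zero {q : ℤ[X]} {z : GaussianInt} {s : ℤ} (hs : Odd s)
    (hz : Odd (z.re + z.im)) (h : aeval ((z : ℂ) / s) q = 0) : Even (q.eval 1) := by
  have hroot := aeval_scaleRoots_eq_zero_of_aeval_div (by rintro rfl; simp at hs) h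
  have hz1 : toZModTwo z = 1 := by rw [toZModTwo_apply]; exact hz.intCast_zmod_two
  have hroot₂ : aeval (1 : ZMod 2) (q.scaleRoots s) = 0 := by
    rw [← hz1, ← map_zero toZModTwo, ← hroot]
    exact aeval_algHom_apply toZModTwo.toIntAlgHom z _
  rw [aeval_one_scaleRoots_of_intCast_eq_one q hs.intCast_zmod_two] at hroot₂
  exact ZMod.intCast_eq_zero_iff_even.mp hroot₂

end GaussianInt

/-- The complex number `z₀ = (3 + 4i)/5` is not a root of any integer polynomial `q` with
`q(1) = ±1`. -/
theorem stmt4 :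
    ¬ ∃ q : Polynomial ℤ,
        (q.eval 1 = 1 ∨ q.eval 1 = -1) ∧
        Polynomial.eval₂ (Int.castRingHom ℂ) ((3 + 4 * Complex.I) / 5) q = 0 := by
  rintro ⟨q, hq1, hq0⟩
  have heven := GaussianInt.even_eval_one_of_aeval_div_eq_zero (z := ⟨3, 4⟩) (s := 5)
    (by decide) (by decide) (by simpa [GaussianInt.toComplex_def', aeval_def] using hq0)
  rcases hq1 with h | h <;> simp [h] at heven
end

section
/- Let q ∈ ℤ[t] be a polynomial with q(1) = ±1, and suppose n = p^k is a prime power. Then no primitive n-th root of unity is a root of q. -/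
/-- If `q ∈ ℤ[t]` satisfies `q(1) = ±1` and `n = p^k` is a prime power (`k ≥ 1`), then no
primitive `n`-th root of unity is a root of `q`. -/
theorem stmt5 (q : Polynomial ℤ) (hq : q.eval 1 = 1 ∨ q.eval 1 = -1)
    (p k : ℕ) (hp : p.Prime) (hk : 1 ≤ k) :
    ∀ z : ℂ, IsPrimitiveRoot z (p ^ k) → Polynomial.eval₂ (Int.castRingHom ℂ) z q ≠ 0 := by
  intro z hz h0
  have hpos : 0 < p ^ k := pow_pos hp.pos k
  have hint : IsIntegral ℤ z := hz.isIntegral hpos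
  have hmin : Polynomial.cyclotomic (p ^ k) ℤ = minpoly ℤ z :=
    Polynomial.cyclotomic_eq_minpoly hz hpos
  have hdvd : minpoly ℤ z ∣ q := by
    apply minpoly.isIntegrallyClosed_dvd hint
    rwa [Polynomial.aeval_def]
  rw [← hmin] at hdvd
  have hdvd1 : (Polynomial.cyclotomic (p ^ k) ℤ).eval 1 ∣ q.eval 1 :=
    Polynomial.eval_dvd hdvd
  obtain ⟨k', rfl⟩ : ∃ k', k = k' + 1 := ⟨k - 1, (Nat.succ_pred_eq_of_pos hk).symm⟩
  haveI : Fact p.Prime := ⟨hp⟩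
  rw [Polynomial.eval_one_cyclotomic_prime_pow] at hdvd1
  have := Int.isUnit_iff.mp (isUnit_of_dvd_unit hdvd1 (by rcases hq with h | h <;> simp [h, Int.isUnit_iff]))
  have h2 := hp.two_le
  omega
end

section
/- Let Σ = {p ∈ ℤ[t,t⁻¹] : p(1) = ±1}. If f : M → N is a morphism of finitely generated free ℤ[t,t⁻¹]-modules such that the induced map ℤ ⊗_{ℤ[t,t⁻¹]} M → ℤ ⊗_{ℤ[t,t⁻¹]} N (via the augmentation t ↦ 1) is an isomorphism, then Σ⁻¹f : Σ⁻¹M → Σ⁻¹N is an isomorphism. -/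
/-- The augmentation `ε : ℤ[t,t⁻¹] → ℤ`, i.e. evaluation at `t = 1`. -/
noncomputable def laurentAug : LaurentPolynomial ℤ →+* ℤ :=
  AddMonoidAlgebra.liftNCRingHom (RingHom.id ℤ) 1 fun _ _ => Commute.all _ _

/-- The multiplicative set `Σ ⊆ ℤ[t,t⁻¹]` of Laurent polynomials `p` with `p(1) = ±1`. -/
noncomputable def augSubmonoid : Submonoid (LaurentPolynomial ℤ) where
  carrier := {p | laurentAug p = 1 ∨ laurentAug p = -1}
  one_mem' := Or.inl (map_one laurentAug)
  mul_mem' := by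
    rintro a b (ha | ha) (hb | hb) <;> simp_all [Set.mem_setOf_eq, map_mul]

/-- `ℤ` as an algebra over `ℤ[t,t⁻¹]` via the augmentation. -/
noncomputable instance : Algebra (LaurentPolynomial ℤ) ℤ := laurentAug.toAlgebra

/-! For any `ℤ[t,t⁻¹]`-algebra `S`, the base change `S ⊗ f` is represented by the image in `S` of
the matrix `A` of `f`, so it is invertible exactly when `det A` becomes a unit in `S`. Bijectivity over `ℤ` forces `M` and `N` to
have the same rank (so `A` is square) and `ε(det A) = ±1`, i.e. `det A ∈ Σ`; hence `det A` is a
unit in `Σ⁻¹ℤ[t,t⁻¹]` and `Σ⁻¹f` is invertible. -/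

open Module

section BaseChange

variable {R S : Type*} [CommRing R] [CommRing S] [Algebra R S]
  {M N : Type*} [AddCommGroup M] [Module R M] [AddCommGroup N] [Module R N]

theorem LinearMap.isUnit_det_toMatrix_iff_bijective {ι : Type*} [Fintype ι] [DecidableEq ι]
    (b : Basis ι R M) (c : Basis ι R N) (f : M →ₗ[R] N) :
    IsUnit (LinearMap.toMatrix b c f).det ↔ Function.Bijective f :=
  ⟨fun hdet => LinearEquiv.coe_ofIsUnitDet hdet ▸ (LinearEquiv.ofIsUnitDet hdet).bijective,
    fun hf => (LinearEquiv.ofBijective f hf).isUnit_det b c⟩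

theorem LinearMap.bijective_baseChange_iff_isUnit_algebraMap_det {ι : Type*} [Fintype ι]
    [DecidableEq ι] (b : Basis ι R M) (c : Basis ι R N) (f : M →ₗ[R] N) :
    Function.Bijective (f.baseChange S) ↔
      IsUnit (algebraMap R S (LinearMap.toMatrix b c f).det) := by
  rw [← isUnit_det_toMatrix_iff_bijective (Algebra.TensorProduct.basis S b)
    (Algebra.TensorProduct.basis S c), toMatrix_baseChange, RingHom.map_det]
  rfl

theorem LinearMap.bijective_baseChange_of_bijective_baseChange [Nontrivial S]
    {T : Type*} [CommRing T] [Algebra R T]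
    [Free R M] [Module.Finite R M] [Free R N] [Module.Finite R N] (f : M →ₗ[R] N)
    (hS : Function.Bijective (f.baseChange S))
    (hST : ∀ r : R, IsUnit (algebraMap R S r) → IsUnit (algebraMap R T r)) :
    Function.Bijective (f.baseChange T) := by
  classical
  let b := Free.chooseBasis R M
  let c := Free.chooseBasis R N
  -- Over the nontrivial ring `S`, `S ⊗ M ≃ S ⊗ N` forces the index types of `b` and `c` to be
  -- equinumerous; reindexing `c` makes the matrix of `f` square.
  let e := LinearEquiv.ofBijective _ hS
  let c' := c.reindex (((Algebra.TensorProduct.basis S b).map e).indexEquiv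
    (Algebra.TensorProduct.basis S c)).symm
  rw [bijective_baseChange_iff_isUnit_algebraMap_det b c'] at hS ⊢
  exact hST _ hS

end BaseChange

theorem mem_augSubmonoid_iff {p : LaurentPolynomial ℤ} :
    p ∈ augSubmonoid ↔ IsUnit (laurentAug p) :=
  Int.isUnit_iff.symm

/-- If `f : M → N` is a morphism of finitely generated free `ℤ[t,t⁻¹]`-modules whose base change
along the augmentation `ℤ ⊗ M → ℤ ⊗ N` is an isomorphism, then the localized map
`Σ⁻¹M → Σ⁻¹N` is an isomorphism. -/
theorem stmt7 {M N : Type} [AddCommGroup M] [AddCommGroup N]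
    [Module (LaurentPolynomial ℤ) M] [Module (LaurentPolynomial ℤ) N]
    [Module.Free (LaurentPolynomial ℤ) M] [Module.Free (LaurentPolynomial ℤ) N]
    [Module.Finite (LaurentPolynomial ℤ) M] [Module.Finite (LaurentPolynomial ℤ) N]
    (f : M →ₗ[LaurentPolynomial ℤ] N)
    (h : Function.Bijective (LinearMap.baseChange ℤ f)) :
    Function.Bijective (LinearMap.baseChange (Localization augSubmonoid) f) :=
  f.bijective_baseChange_of_bijective_baseChange h fun _ hp =>
    IsLocalization.map_units _ ⟨_, mem_augSubmonoid_iff.2 hp⟩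
end
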